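/- For m₁, m₂ > 0 real numbers, the contour integral ∫_{-∞}^{∞} e^{2πit}/(-t + i(m₁+m₂))² dt equals -4π² e^{-2π(m₁+m₂)}. Consequently, -(m₁m₂/π) times this integral equals 4π(m₁m₂)e^{-2π(m₁+m₂)}. -/

import Mathlib

/-!
Instead of the residue theorem we use Fourier inversion. The function `s ↦ s e^{-bs}` on
`[0, ∞)`, extended by zero, has Fourier transform `t ↦ (b + 2πit)⁻²`, which is integrable;
inverting at `x > 0` gives `∫ e^{2πixt} (b + 2πit)⁻² dt = x e^{-bx}`. For `b = 2πc` one has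
`(b + 2πit)² = -4π² (-t + ic)²`.
-/

open Real MeasureTheory Set Filter FourierTransform
open scoped Topology Complex

section LaplaceRamp

variable {a : ℂ}

lemma norm_mul_cexp_neg_mul (a : ℂ) {s : ℝ} (hs : 0 ≤ s) :
    ‖(s : ℂ) * cexp (-(a * s))‖ = s * Real.exp (-a.re * s) := by
  rw [norm_mul, Complex.norm_real, Real.norm_of_nonneg hs, Complex.norm_exp]
  simp

lemma integrableOn_Ioi_mul_cexp_neg_mul (ha : 0 < a.re) :
    IntegrableOn (fun s : ℝ ↦ (s : ℂ) * cexp (-(a * s))) (Ioi 0) := by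
  refine Integrable.mono'
    (integrableOn_rpow_mul_exp_neg_mul_rpow (s := 1) (by norm_num) zero_lt_one ha) (by fun_prop) ?_
  filter_upwards [ae_restrict_mem measurableSet_Ioi] with s hs
  rw [norm_mul_cexp_neg_mul a (le_of_lt hs), rpow_one]

lemma tendsto_mul_cexp_neg_mul_atTop (ha : 0 < a.re) :
    Tendsto (fun s : ℝ ↦ (s : ℂ) * cexp (-(a * s))) atTop (𝓝 0) := by
  rw [tendsto_zero_iff_norm_tendsto_zero]
  refine (tendsto_rpow_mul_exp_neg_mul_atTop_nhds_zero 1 _ ha).congr' ?_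
  filter_upwards [eventually_ge_atTop 0] with s hs
  rw [norm_mul_cexp_neg_mul a hs, rpow_one]

lemma tendsto_cexp_neg_mul_atTop (ha : 0 < a.re) :
    Tendsto (fun s : ℝ ↦ cexp (-(a * s))) atTop (𝓝 0) := by
  rw [tendsto_zero_iff_norm_tendsto_zero]
  refine (Real.tendsto_exp_neg_atTop_nhds_zero.comp (tendsto_id.const_mul_atTop ha)).congr
    fun s ↦ ?_
  simp [Complex.norm_exp]

lemma integral_Ioi_mul_cexp_neg_mul (ha : 0 < a.re) :
    ∫ s : ℝ in Ioi 0, (s : ℂ) * cexp (-(a * s)) = (a ^ 2)⁻¹ := by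
  have ha₀ : a ≠ 0 := fun h ↦ by simp [h] at ha
  let F : ℝ → ℂ := fun s ↦ -((s * a⁻¹ + (a ^ 2)⁻¹) * cexp (-(a * s)))
  have hF : ∀ s ∈ Ici (0 : ℝ), HasDerivAt F ((s : ℂ) * cexp (-(a * s))) s := by
    intro s _
    have hid : HasDerivAt (fun s : ℝ ↦ (s : ℂ)) 1 s := (hasDerivAt_id s).ofReal_comp
    have hexp : HasDerivAt (fun s : ℝ ↦ cexp (-(a * s))) (cexp (-(a * s)) * -a) s :=
      (hid.const_mul a).fun_neg.cexp.congr_deriv (by ring)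
    exact (((hid.mul_const a⁻¹).add_const (a ^ 2)⁻¹).fun_mul hexp).fun_neg.congr_deriv
      (by field_simp; ring)
  have hF_lim : Tendsto F atTop (𝓝 0) := by
    simpa [F, add_mul, mul_right_comm _ a⁻¹] using
      (((tendsto_mul_cexp_neg_mul_atTop ha).mul_const a⁻¹).add
        ((tendsto_cexp_neg_mul_atTop ha).const_mul (a ^ 2)⁻¹)).neg
  rw [integral_Ioi_of_hasDerivAt_of_tendsto' hF (integrableOn_Ioi_mul_cexp_neg_mul ha) hF_lim]
  simp [F]

end LaplaceRamp

section RampExp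

variable {b : ℝ}

noncomputable def rampExp (b : ℝ) : ℝ → ℂ := (Ici 0).indicator fun s ↦ (s : ℂ) * cexp (-(b * s))

lemma integrable_rampExp (hb : 0 < b) : Integrable (rampExp b) := by
  rw [rampExp, integrable_indicator_iff measurableSet_Ici, integrableOn_Ici_iff_integrableOn_Ioi]
  exact integrableOn_Ioi_mul_cexp_neg_mul (by simpa)

lemma rampExp_of_nonneg {s : ℝ} (hs : 0 ≤ s) : rampExp b s = s * cexp (-(b * s)) :=
  indicator_of_mem (mem_Ici.2 hs) _

lemma continuousAt_rampExp {x : ℝ} (hx : 0 < x) : ContinuousAt (rampExp b) x := by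
  refine ContinuousAt.congr (f := fun s : ℝ ↦ (s : ℂ) * cexp (-(b * s))) (by fun_prop) ?_
  filter_upwards [Ioi_mem_nhds hx] with s hs
  exact (rampExp_of_nonneg (le_of_lt hs)).symm

lemma fourier_rampExp (hb : 0 < b) (t : ℝ) :
    𝓕 (rampExp b) t = ((b + 2 * π * t * Complex.I) ^ 2)⁻¹ := by
  rw [fourier_real_eq_integral_exp_smul, ← integral_Ioi_mul_cexp_neg_mul (by simpa),
    ← integral_Ici_eq_integral_Ioi, ← integral_indicator measurableSet_Ici]
  congr with s
  by_cases hs : s ∈ Ici 0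
  · rw [rampExp, indicator_of_mem hs, indicator_of_mem hs, smul_eq_mul, mul_left_comm,
      ← Complex.exp_add]
    push_cast
    ring_nf
  · simp [rampExp, indicator_of_notMem hs]

lemma norm_inv_add_two_pi_mul_I_sq (b t : ℝ) :
    ‖((b + 2 * π * t * Complex.I) ^ 2)⁻¹‖ = (b ^ 2 + (2 * π * t) ^ 2)⁻¹ := by
  rw [norm_inv, norm_pow, Complex.sq_norm, ← Complex.normSq_add_mul_I]
  push_cast
  ring_nf

lemma integrable_fourier_rampExp (hb : 0 < b) : Integrable (𝓕 (rampExp b)) := by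
  have hmaj : Integrable fun t : ℝ ↦ (b ^ 2)⁻¹ * (1 + (2 * π / b * t) ^ 2)⁻¹ :=
    (integrable_inv_one_add_sq.comp_mul_left' (by positivity)).const_mul _
  refine hmaj.mono' ?_ (ae_of_all _ fun t ↦ ?_)
  · exact (VectorFourier.fourierIntegral_continuous Real.continuous_fourierChar
      (by fun_prop) (integrable_rampExp hb)).aestronglyMeasurable
  · rw [fourier_rampExp hb, norm_inv_add_two_pi_mul_I_sq, ← mul_inv]
    refine le_of_eq (congrArg _ ?_)
    field_simp

lemma integral_cexp_mul_inv_add_mul_I_sq (hb : 0 < b) {x : ℝ} (hx : 0 < x) :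
    ∫ t : ℝ, cexp (2 * π * Complex.I * x * t) * ((b + 2 * π * t * Complex.I) ^ 2)⁻¹
      = x * cexp (-(b * x)) := by
  have := (integrable_rampExp hb).fourierInv_fourier_eq (integrable_fourier_rampExp hb)
    (continuousAt_rampExp hx)
  rw [fourierInv_eq', rampExp_of_nonneg hx.le] at this
  rw [← this]
  congr with t
  rw [fourier_rampExp hb, Real.inner_apply, smul_eq_mul]
  push_cast
  ring_nf

end RampExp

lemma integral_cexp_div_neg_add_I_mul_sq {c x : ℝ} (hc : 0 < c) (hx : 0 < x) :
    ∫ t : ℝ, cexp (2 * π * Complex.I * x * t) / (-(t : ℂ) + Complex.I * c) ^ 2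
      = -4 * π ^ 2 * x * cexp (-2 * π * c * x) := by
  have hsq (t : ℝ) : ((↑(2 * π * c) : ℂ) + 2 * π * t * Complex.I) ^ 2
      = -4 * π ^ 2 * (-(t : ℂ) + Complex.I * c) ^ 2 := by
    push_cast
    linear_combination (4 * π ^ 2 * (c : ℂ) ^ 2 + 4 * π ^ 2 * t ^ 2) * Complex.I_sq
  calc ∫ t : ℝ, cexp (2 * π * Complex.I * x * t) / (-(t : ℂ) + Complex.I * c) ^ 2
      = ∫ t : ℝ, -4 * π ^ 2 * (cexp (2 * π * Complex.I * x * t) *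
          ((↑(2 * π * c) + 2 * π * t * Complex.I) ^ 2)⁻¹) := by
        congr with t
        rw [hsq, mul_inv, div_eq_mul_inv]
        field_simp
    _ = -4 * π ^ 2 * x * cexp (-2 * π * c * x) := by
        rw [integral_const_mul, integral_cexp_mul_inv_add_mul_I_sq (by positivity) hx]
        push_cast
        simp only [neg_mul]
        ring

theorem stmt_0 (m₁ m₂ : ℝ) (h₁ : 0 < m₁) (h₂ : 0 < m₂) :
    (∫ t : ℝ, Complex.exp (2 * π * Complex.I * t) /
      (-(t : ℂ) + Complex.I * (m₁ + m₂)) ^ 2)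
      = -4 * π ^ 2 * Complex.exp (-2 * π * (m₁ + m₂)) ∧
    -((m₁ * m₂ : ℂ) / π) * (∫ t : ℝ, Complex.exp (2 * π * Complex.I * t) /
      (-(t : ℂ) + Complex.I * (m₁ + m₂)) ^ 2)
      = 4 * π * (m₁ * m₂) * Complex.exp (-2 * π * (m₁ + m₂)) := by
  have hint := integral_cexp_div_neg_add_I_mul_sq (add_pos h₁ h₂) one_pos
  simp only [Complex.ofReal_one, mul_one, Complex.ofReal_add] at hint
  refine ⟨hint, ?_⟩
  rw [hint]
  field_simp [Complex.ofReal_ne_zero.2 pi_ne_zero]
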